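/- arXiv:1203.2660 — 7 statements merged into one kernel-verified Lean document; each statement's English description precedes it below -/
import Mathlib

section
/- Let n and k be integers with 1 ≤ k < n. For any two vertices U and W of the Johnson graph J(n,k), the graph distance between U and W equals k − |U ∩ W| (equivalently, |U \ W|). -/
/-- The Johnson graph `J(n,k)`: vertices are the `k`-element subsets of `{1,...,n}`,
two vertices adjacent iff their intersection has `k-1` elements. -/
def johnsonGraph (n k : ℕ) : SimpleGraph {s : Finset (Fin n) // s.card = k} where
  Adj U W := U ≠ W ∧ (U.1 ∩ W.1).card = k - 1
  symm := by
    constructor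
    intro U W h
    exact ⟨h.1.symm, by rw [Finset.inter_comm]; exact h.2⟩
  loopless := by
    constructor
    intro U h
    exact h.1 rfl

/-!
Adjacency in `J(n,k)` means `|U \ V| = 1`, and `|U \ W|` satisfies the triangle inequality,
so no walk from `U` to `W` is shorter than `|U \ W|`. Conversely, as long as `U ≠ W`, swapping
an element of `U \ W` for one of `W \ U` moves to a neighbour of `U` one step closer to `W`.
-/

namespace johnsonGraph

open Finset SimpleGraph

variable {n k : ℕ}

theorem sdiff_nonempty_iff_ne {U V : {s : Finset (Fin n) // s.card = k}} :
    (U.1 \ V.1).Nonempty ↔ U ≠ V := by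
  rw [sdiff_nonempty, ne_eq, Subtype.ext_iff]
  exact ⟨fun h heq => h heq.le,
    fun h hsub => h (eq_of_subset_of_card_le hsub (by rw [U.2, V.2]))⟩

theorem adj_iff_card_sdiff_eq_one {U V : {s : Finset (Fin n) // s.card = k}} :
    (johnsonGraph n k).Adj U V ↔ #(U.1 \ V.1) = 1 := by
  have hsplit : #(U.1 \ V.1) + #(U.1 ∩ V.1) = k :=
    (card_sdiff_add_card_inter _ _).trans U.2
  constructor
  · rintro ⟨hne, hinter⟩
    have := (sdiff_nonempty_iff_ne.mpr hne).card_pos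
    omega
  · intro h
    exact ⟨sdiff_nonempty_iff_ne.mp (card_pos.mp (by omega)), by omega⟩

theorem card_sdiff_le_length {U W : {s : Finset (Fin n) // s.card = k}}
    (p : (johnsonGraph n k).Walk U W) : #(U.1 \ W.1) ≤ p.length := by
  induction p with
  | nil => simp
  | @cons U V W hUV p ih =>
    calc #(U.1 \ W.1) ≤ #(U.1 \ V.1) + #(V.1 \ W.1) :=
          (card_le_card (sdiff_triangle _ _ _)).trans (card_union_le _ _)
      _ ≤ (Walk.cons hUV p).length := by
          rw [Walk.length_cons, adj_iff_card_sdiff_eq_one.mp hUV]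
          omega

theorem exists_adj_card_sdiff_add_one {U W : {s : Finset (Fin n) // s.card = k}} (h : U ≠ W) :
    ∃ V, (johnsonGraph n k).Adj U V ∧ #(V.1 \ W.1) + 1 = #(U.1 \ W.1) := by
  obtain ⟨a, ha⟩ := sdiff_nonempty_iff_ne.mpr h
  obtain ⟨b, hb⟩ := sdiff_nonempty_iff_ne.mpr h.symm
  rw [mem_sdiff] at ha hb
  have hcard : #(insert b (U.1.erase a)) = k := by
    rw [card_insert_of_notMem (fun hb' => hb.2 (mem_of_mem_erase hb')),
      card_erase_of_mem ha.1, U.2]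
    have := card_pos.mpr ⟨a, ha.1⟩
    omega
  refine ⟨⟨_, hcard⟩, adj_iff_card_sdiff_eq_one.mpr ?_, ?_⟩
  · have : U.1 \ insert b (U.1.erase a) = {a} := by grind
    rw [this, card_singleton]
  · have : insert b (U.1.erase a) \ W.1 = (U.1 \ W.1).erase a := by grind
    rw [this, card_erase_add_one (mem_sdiff.mpr ha)]

theorem exists_walk_length_eq_card_sdiff (U W : {s : Finset (Fin n) // s.card = k}) :
    ∃ p : (johnsonGraph n k).Walk U W, p.length = #(U.1 \ W.1) := by
  by_cases h : U = W
  · subst h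
    exact ⟨.nil, by simp⟩
  · obtain ⟨V, hUV, hV⟩ := exists_adj_card_sdiff_add_one h
    obtain ⟨p, hp⟩ := exists_walk_length_eq_card_sdiff V W
    exact ⟨.cons hUV p, by rw [Walk.length_cons, hp, hV]⟩
termination_by #(U.1 \ W.1)

end johnsonGraph

theorem johnsonGraph_dist_general (n k : ℕ)
    (U W : {s : Finset (Fin n) // s.card = k}) :
    (johnsonGraph n k).dist U W = k - (U.1 ∩ W.1).card ∧
    (johnsonGraph n k).dist U W = (U.1 \ W.1).card := by
  obtain ⟨p, hp⟩ := johnsonGraph.exists_walk_length_eq_card_sdiff U W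
  obtain ⟨q, hq⟩ := SimpleGraph.Reachable.exists_walk_length_eq_dist ⟨p⟩
  have hdist : (johnsonGraph n k).dist U W = (U.1 \ W.1).card :=
    le_antisymm (hp ▸ SimpleGraph.dist_le p) (hq ▸ johnsonGraph.card_sdiff_le_length q)
  refine ⟨?_, hdist⟩
  rw [hdist, Finset.card_sdiff, Finset.inter_comm, U.2]

/-- For `1 ≤ k < n`, the graph distance between two vertices `U, W` of the Johnson
graph `J(n,k)` equals `k - |U ∩ W|`, equivalently `|U \ W|`. -/
theorem johnsonGraph_dist (n k : ℕ) (hk : 1 ≤ k) (hkn : k < n)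
    (U W : {s : Finset (Fin n) // s.card = k}) :
    (johnsonGraph n k).dist U W = k - (U.1 ∩ W.1).card ∧
    (johnsonGraph n k).dist U W = (U.1 \ W.1).card :=
  johnsonGraph_dist_general n k U W
end

section
/- Let n ≥ 5 be an integer. Any resolving set for the Johnson graph J(n,2) is also a resolving set for the Kneser graph K(n,2); consequently β(J(n,2)) = β(K(n,2)). -/
/-- The Kneser graph `K(n,k)`: vertices are the `k`-element subsets of `{1,...,n}`,
two vertices adjacent iff the corresponding subsets are disjoint. -/
def kneserGraph (n k : ℕ) : SimpleGraph {s : Finset (Fin n) // s.card = k} where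
  Adj U W := U ≠ W ∧ Disjoint U.1 W.1
  symm := by
    constructor
    intro U W h
    exact ⟨h.1.symm, h.2.symm⟩
  loopless := by
    constructor
    intro U h
    exact h.1 rfl

/-- A set `S` of vertices is a resolving set for `G` if every pair of distinct
vertices is resolved by some vertex of `S`, i.e. is at different distances from it. -/
def resolvingSet {V : Type*} (G : SimpleGraph V) (S : Set V) : Prop :=
  ∀ u v : V, u ≠ v → ∃ x ∈ S, G.dist u x ≠ G.dist v x

/-- The metric dimension `β(G)`: the minimum cardinality of a resolving set for `G`. -/
noncomputable def metricDim {V : Type*} (G : SimpleGraph V) : ℕ :=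
  sInf {m | ∃ S : Finset V, resolvingSet G ↑S ∧ S.card = m}

/-!
On `2`-subsets the Johnson distance is `2 - |U ∩ W|`, and for `n ≥ 5` the Kneser distance is
obtained from it by exchanging the values `1` and `2`: disjoint pairs are Kneser-adjacent, and two
pairs meeting in one point have a common disjoint pair among the `n - 3 ≥ 2` remaining points.
Since the Kneser distance is an injective function of the Johnson distance, a vertex resolves a
pair in one graph iff it does so in the other, so the two graphs have the same resolving sets.
-/

open Finset SimpleGraph

lemma Finset.disjoint_iff_card_inter_eq_zero {α : Type*} [DecidableEq α] {s t : Finset α} :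
    Disjoint s t ↔ #(s ∩ t) = 0 := by
  rw [card_eq_zero, disjoint_iff_inter_eq_empty]

section Resolving

variable {V : Type*} {G H : SimpleGraph V}

lemma SimpleGraph.dist_eq_two_of_adj_of_adj {u v w : V} (huv : u ≠ v) (hnadj : ¬G.Adj u v)
    (huw : G.Adj u w) (hwv : G.Adj w v) : G.dist u v = 2 := by
  have hedist : G.edist u v = 2 :=
    edist_eq_two_iff.mpr ⟨huv, hnadj, w, (G.mem_commonNeighbors).mpr ⟨huw, hwv.symm⟩⟩
  simp [SimpleGraph.dist, hedist]

lemma resolvingSet_iff_of_dist_eq_comp {f : ℕ → ℕ} (hf : Function.Injective f)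
    (hdist : ∀ u v, H.dist u v = f (G.dist u v)) (S : Set V) :
    resolvingSet G S ↔ resolvingSet H S := by
  simp only [resolvingSet, hdist, hf.ne_iff]

lemma metricDim_congr (h : ∀ S, resolvingSet G S ↔ resolvingSet H S) :
    metricDim G = metricDim H := by
  simp only [metricDim, h]

end Resolving

section Subsets

variable {n k : ℕ} {u v : {s : Finset (Fin n) // s.card = k}}

lemma card_inter_le_of_card_eq : #(u.1 ∩ v.1) ≤ k :=
  (card_le_card inter_subset_left).trans_eq u.2

lemma card_inter_eq_iff_eq : #(u.1 ∩ v.1) = k ↔ u = v := by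
  refine ⟨fun h => ?_, by rintro rfl; simpa using u.2⟩
  have hu := eq_of_subset_of_card_le inter_subset_left (u.2.trans h.symm).le
  have hv := eq_of_subset_of_card_le inter_subset_right (v.2.trans h.symm).le
  exact Subtype.ext (hu.symm.trans hv)

lemma johnsonGraph_adj_iff (hk : 0 < k) : (johnsonGraph n k).Adj u v ↔ #(u.1 ∩ v.1) = k - 1 :=
  ⟨And.right, fun h => ⟨fun huv => by rw [← card_inter_eq_iff_eq] at huv; omega, h⟩⟩

lemma kneserGraph_adj_iff (hk : 0 < k) : (kneserGraph n k).Adj u v ↔ Disjoint u.1 v.1 := by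
  refine ⟨And.right, fun h => ⟨fun huv => ?_, h⟩⟩
  subst huv
  have hempty : u.1 = ∅ := disjoint_self.mp h
  exact hk.ne (by simpa [hempty] using u.2)

lemma kneserGraph_exists_adj_adj (hk : 0 < k) (h : #(u.1 ∪ v.1) + k ≤ n) :
    ∃ w, (kneserGraph n k).Adj u w ∧ (kneserGraph n k).Adj w v := by
  have hcompl : k ≤ #(u.1 ∪ v.1)ᶜ := by
    rw [card_compl, Fintype.card_fin]
    omega
  obtain ⟨w, hw, hwk⟩ := exists_subset_card_eq hcompl
  have hdisj : Disjoint (u.1 ∪ v.1) w := disjoint_compl_right.mono_right hw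
  refine ⟨⟨w, hwk⟩, (kneserGraph_adj_iff hk).mpr ?_, (kneserGraph_adj_iff hk).mpr ?_⟩
  · exact hdisj.mono_left subset_union_left
  · exact (hdisj.mono_left subset_union_right).symm

end Subsets

section Pairs

variable {n : ℕ} {u v : {s : Finset (Fin n) // s.card = 2}}

lemma johnsonGraph_two_exists_adj_adj (h : Disjoint u.1 v.1) :
    ∃ w, (johnsonGraph n 2).Adj u w ∧ (johnsonGraph n 2).Adj w v := by
  obtain ⟨a, ha⟩ := card_pos.mp (u.2.trans_gt two_pos)
  obtain ⟨b, hb⟩ := card_pos.mp (v.2.trans_gt two_pos)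
  have hav : a ∉ v.1 := disjoint_left.mp h ha
  have hbu : b ∉ u.1 := disjoint_right.mp h hb
  have hab : a ≠ b := fun hab => hav (hab ▸ hb)
  refine ⟨⟨{a, b}, card_pair hab⟩, (johnsonGraph_adj_iff two_pos).mpr ?_,
    (johnsonGraph_adj_iff two_pos).mpr ?_⟩
  · rw [inter_insert_of_mem ha, inter_singleton_of_notMem hbu]
    rfl
  · rw [insert_inter_of_notMem hav, singleton_inter_of_mem hb]
    rfl

theorem johnsonGraph_two_dist (u v : {s : Finset (Fin n) // s.card = 2}) :
    (johnsonGraph n 2).dist u v = 2 - #(u.1 ∩ v.1) := by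
  have hle : #(u.1 ∩ v.1) ≤ 2 := card_inter_le_of_card_eq
  interval_cases hcard : #(u.1 ∩ v.1)
  · have hdisj : Disjoint u.1 v.1 := disjoint_iff_card_inter_eq_zero.mpr hcard
    obtain ⟨w, huw, hwv⟩ := johnsonGraph_two_exists_adj_adj hdisj
    refine dist_eq_two_of_adj_of_adj (card_inter_eq_iff_eq.not.mp (by omega)) ?_ huw hwv
    rw [johnsonGraph_adj_iff two_pos, hcard]
    decide
  · exact dist_eq_one_iff_adj.mpr ((johnsonGraph_adj_iff two_pos).mpr hcard)
  · simp [card_inter_eq_iff_eq.mp hcard]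

theorem kneserGraph_two_dist (hn : 5 ≤ n) (u v : {s : Finset (Fin n) // s.card = 2}) :
    (kneserGraph n 2).dist u v = Equiv.swap 1 2 ((johnsonGraph n 2).dist u v) := by
  rw [johnsonGraph_two_dist]
  have hle : #(u.1 ∩ v.1) ≤ 2 := card_inter_le_of_card_eq
  interval_cases hcard : #(u.1 ∩ v.1)
  · exact dist_eq_one_iff_adj.mpr
      ((kneserGraph_adj_iff two_pos).mpr (disjoint_iff_card_inter_eq_zero.mpr hcard))
  · have hunion := card_union_add_card_inter u.1 v.1
    rw [u.2, v.2, hcard] at hunion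
    obtain ⟨w, huw, hwv⟩ := kneserGraph_exists_adj_adj two_pos (by omega : #(u.1 ∪ v.1) + 2 ≤ n)
    refine dist_eq_two_of_adj_of_adj (card_inter_eq_iff_eq.not.mp (by omega)) ?_ huw hwv
    rw [kneserGraph_adj_iff two_pos, disjoint_iff_card_inter_eq_zero, hcard]
    decide
  · simp [card_inter_eq_iff_eq.mp hcard, Equiv.swap_apply_of_ne_of_ne]

end Pairs

/-- For `n ≥ 5`, any resolving set for the Johnson graph `J(n,2)` is also a resolving
set for the Kneser graph `K(n,2)`; consequently `β(J(n,2)) = β(K(n,2))`. -/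
theorem johnson_resolving_implies_kneser_k2 (n : ℕ) (hn : 5 ≤ n) :
    (∀ S : Set {s : Finset (Fin n) // s.card = 2},
      resolvingSet (johnsonGraph n 2) S → resolvingSet (kneserGraph n 2) S) ∧
    metricDim (johnsonGraph n 2) = metricDim (kneserGraph n 2) := by
  have hiff (S : Set {s : Finset (Fin n) // s.card = 2}) :
      resolvingSet (johnsonGraph n 2) S ↔ resolvingSet (kneserGraph n 2) S :=
    resolvingSet_iff_of_dist_eq_comp (Equiv.swap 1 2).injective (kneserGraph_two_dist hn) S
  exact ⟨fun S => (hiff S).mp, metricDim_congr hiff⟩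
end

section
/- Let n and k be integers with n ≥ 2k ≥ 2. A set S of vertices of the Johnson graph J(n,k) is a resolving set for J(n,k) if and only if for any two disjoint non-empty subsets U, W of {1,...,n} with |U| = |W| ≤ k, there exists a vertex X ∈ S satisfying |X ∩ U| ≠ |X ∩ W|. -/
/-!
In `J(n,k)` the distance is `d(A, B) = #(A \ B)`: replacing an element of `A \ B` by one of
`B \ A` is an edge lowering it by one, and along an edge it drops by at most one. Comparing
`d(A, X)` with `d(B, X)`, the part `A ∩ B` contributes equally, so `X` resolves `A, B` iff
`#(X ∩ (A \ B)) ≠ #(X ∩ (B \ A))`. Finally the pairs `(A \ B, B \ A)` for `A ≠ B` are exactly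
the disjoint non-empty `U, W` with `#U = #W ≤ k`: given such `U, W`, padding both by a common
set of `k - #U` fresh elements (possible as `n ≥ 2k`) gives `A` and `B`.
-/

namespace Finset

variable {α : Type*} [DecidableEq α]

lemma card_inter_add_card_inter_sdiff (X A B : Finset α) :
    #(X ∩ A) + #(X ∩ (B \ A)) = #(X ∩ (A ∪ B)) := by
  rw [← union_sdiff_self_eq_union, inter_union_distrib_left, card_union_of_disjoint]
  exact disjoint_sdiff.mono inter_subset_right inter_subset_right

lemma card_sdiff_eq_card_sdiff_iff_card_inter {A B : Finset α} (h : #A = #B) (X : Finset α) :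
    #(A \ X) = #(B \ X) ↔ #(X ∩ (A \ B)) = #(X ∩ (B \ A)) := by
  have hA := card_sdiff_add_card_inter A X
  have hB := card_sdiff_add_card_inter B X
  have hAB := card_inter_add_card_inter_sdiff X A B
  have hBA := card_inter_add_card_inter_sdiff X B A
  rw [inter_comm A] at hA
  rw [inter_comm B] at hB
  rw [union_comm] at hBA
  omega

end Finset

open Finset

section Johnson

variable {n k : ℕ}

lemma nonempty_sdiff_of_ne {A B : {s : Finset (Fin n) // s.card = k}} (hAB : A ≠ B) :
    (A.1 \ B.1).Nonempty := by
  rw [sdiff_nonempty]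
  exact fun hsub => hAB (Subtype.ext (eq_of_subset_of_card_le hsub (by rw [A.2, B.2])))

lemma johnsonGraph_adj_iff_s4 {A C : {s : Finset (Fin n) // s.card = k}} :
    (johnsonGraph n k).Adj A C ↔ #(A.1 \ C.1) = 1 := by
  have hsplit := card_sdiff_add_card_inter A.1 C.1
  rw [A.2] at hsplit
  constructor
  · rintro ⟨hne, hcard⟩
    have := (nonempty_sdiff_of_ne hne).card_pos
    omega
  · intro hcard
    refine ⟨fun hAC => ?_, by omega⟩
    simp [hAC] at hcard

lemma card_sdiff_le_card_sdiff_add_one_of_adj {A C : {s : Finset (Fin n) // s.card = k}}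
    (h : (johnsonGraph n k).Adj A C) (B : {s : Finset (Fin n) // s.card = k}) :
    #(A.1 \ B.1) ≤ #(C.1 \ B.1) + 1 := by
  calc #(A.1 \ B.1) ≤ #(A.1 \ C.1 ∪ C.1 \ B.1) := card_le_card (sdiff_triangle _ _ _)
    _ ≤ #(A.1 \ C.1) + #(C.1 \ B.1) := card_union_le _ _
    _ = #(C.1 \ B.1) + 1 := by rw [johnsonGraph_adj_iff_s4.1 h, add_comm]

lemma card_sdiff_le_length {A B : {s : Finset (Fin n) // s.card = k}}
    (p : (johnsonGraph n k).Walk A B) : #(A.1 \ B.1) ≤ p.length := by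
  induction p with
  | nil => simp
  | cons h p ih =>
    rw [SimpleGraph.Walk.length_cons]
    exact (card_sdiff_le_card_sdiff_add_one_of_adj h _).trans (by omega)

/-- Exchanging an element of `A \ B` for one of `B \ A` moves one step closer to `B`. -/
lemma exists_adj_card_sdiff_add_one {A B : {s : Finset (Fin n) // s.card = k}} (hAB : A ≠ B) :
    ∃ C, (johnsonGraph n k).Adj A C ∧ #(C.1 \ B.1) + 1 = #(A.1 \ B.1) := by
  have hA := nonempty_sdiff_of_ne hAB
  have hB : (B.1 \ A.1).Nonempty := by
    rw [← card_pos, card_sdiff_comm (by rw [A.2, B.2])]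
    exact hA.card_pos
  obtain ⟨a, ha⟩ := hA
  obtain ⟨b, hb⟩ := hB
  rw [mem_sdiff] at ha hb
  have hbA : b ∉ A.1.erase a := fun h => hb.2 (mem_of_mem_erase h)
  let C : {s : Finset (Fin n) // s.card = k} :=
    ⟨insert b (A.1.erase a), by rw [card_insert_of_notMem hbA, card_erase_add_one ha.1, A.2]⟩
  have hAC : A.1 \ C.1 = {a} := by
    ext x
    simp only [C, mem_sdiff, mem_insert, mem_erase, mem_singleton]
    constructor
    · tauto
    · rintro rfl
      exact ⟨ha.1, by rintro (rfl | ⟨hne, -⟩) <;> tauto⟩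
  have hCB : C.1 \ B.1 = (A.1 \ B.1).erase a := by
    ext x
    simp only [C, mem_sdiff, mem_insert, mem_erase]
    constructor
    · rintro ⟨rfl | hx, hxB⟩ <;> tauto
    · tauto
  refine ⟨C, johnsonGraph_adj_iff_s4.2 (by rw [hAC, card_singleton]), ?_⟩
  rw [hCB, card_erase_add_one (mem_sdiff.2 ha)]

lemma exists_walk_length_eq_card_sdiff (A B : {s : Finset (Fin n) // s.card = k}) :
    ∃ p : (johnsonGraph n k).Walk A B, p.length = #(A.1 \ B.1) := by
  induction hd : #(A.1 \ B.1) generalizing A with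
  | zero =>
    obtain rfl : A = B := by
      by_contra hAB
      obtain ⟨C, -, hC⟩ := exists_adj_card_sdiff_add_one hAB
      omega
    exact ⟨.nil, rfl⟩
  | succ d ih =>
    have hAB : A ≠ B := by rintro rfl; simp at hd
    obtain ⟨C, hAC, hC⟩ := exists_adj_card_sdiff_add_one hAB
    obtain ⟨p, hp⟩ := ih C (by omega)
    exact ⟨.cons hAC p, by rw [SimpleGraph.Walk.length_cons, hp]⟩

lemma johnsonGraph_dist_s4 (A B : {s : Finset (Fin n) // s.card = k}) :
    (johnsonGraph n k).dist A B = #(A.1 \ B.1) := by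
  obtain ⟨p, hp⟩ := exists_walk_length_eq_card_sdiff A B
  obtain ⟨q, hq⟩ := p.reachable.exists_walk_length_eq_dist
  exact le_antisymm (hp ▸ SimpleGraph.dist_le p) (hq ▸ card_sdiff_le_length q)

lemma johnsonGraph_dist_ne_dist_iff (A B X : {s : Finset (Fin n) // s.card = k}) :
    (johnsonGraph n k).dist A X ≠ (johnsonGraph n k).dist B X ↔
      #(X.1 ∩ (A.1 \ B.1)) ≠ #(X.1 ∩ (B.1 \ A.1)) := by
  rw [johnsonGraph_dist_s4, johnsonGraph_dist_s4]
  exact (card_sdiff_eq_card_sdiff_iff_card_inter (by rw [A.2, B.2]) X.1).not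

/-- Take `A = U ∪ T`, `B = W ∪ T` for some `T` of size `k - #U` outside `U ∪ W`; `2k ≤ n` leaves
room for it. -/
lemma exists_vertices_sdiff_eq (hn : 2 * k ≤ n) {U W : Finset (Fin n)} (hUW : Disjoint U W)
    (hcard : #U = #W) (hle : #U ≤ k) :
    ∃ A B : {s : Finset (Fin n) // s.card = k}, A.1 \ B.1 = U ∧ B.1 \ A.1 = W := by
  have hroom : k - #U ≤ #((U ∪ W)ᶜ) := by
    rw [card_compl, card_union_of_disjoint hUW, Fintype.card_fin]
    omega
  obtain ⟨T, hT, hTcard⟩ := exists_subset_card_eq hroom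
  have hUT : Disjoint U T :=
    disjoint_of_subset_right hT (disjoint_compl_right.mono_left subset_union_left)
  have hWT : Disjoint W T :=
    disjoint_of_subset_right hT (disjoint_compl_right.mono_left subset_union_right)
  refine ⟨⟨U ∪ T, by rw [card_union_of_disjoint hUT]; omega⟩,
    ⟨W ∪ T, by rw [card_union_of_disjoint hWT]; omega⟩, ?_, ?_⟩
  all_goals
    rw [disjoint_left] at hUW hUT hWT
    ext x
    have := @hUW x
    have := @hUT x
    have := @hWT x
    simp only [mem_sdiff, mem_union]
    tauto

end Johnson

theorem johnson_resolving_iff_general (n k : ℕ) (hn : 2 * k ≤ n)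
    (S : Set {s : Finset (Fin n) // s.card = k}) :
    resolvingSet (johnsonGraph n k) S ↔
      ∀ U W : Finset (Fin n), U.Nonempty → W.Nonempty → Disjoint U W →
        U.card = W.card → U.card ≤ k →
        ∃ X ∈ S, (X.1 ∩ U).card ≠ (X.1 ∩ W).card := by
  constructor
  · intro hres U W hU _ hUW hcard hle
    obtain ⟨A, B, hAB, hBA⟩ := exists_vertices_sdiff_eq hn hUW hcard hle
    have hne : A ≠ B := by
      rintro rfl
      simp [← hAB] at hU
    obtain ⟨X, hX, hdist⟩ := hres A B hne
    exact ⟨X, hX, by rwa [johnsonGraph_dist_ne_dist_iff, hAB, hBA] at hdist⟩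
  · intro hcond A B hne
    have hAB := nonempty_sdiff_of_ne hne
    have hcard : #(A.1 \ B.1) = #(B.1 \ A.1) := card_sdiff_comm (by rw [A.2, B.2])
    obtain ⟨X, hX, hres⟩ := hcond _ _ hAB (card_pos.1 (hcard ▸ hAB.card_pos))
      disjoint_sdiff_sdiff hcard ((card_le_card sdiff_subset).trans_eq A.2)
    exact ⟨X, hX, (johnsonGraph_dist_ne_dist_iff A B X).2 hres⟩

/-- For `n ≥ 2k ≥ 2`, a set `S` of vertices of the Johnson graph `J(n,k)` is a
resolving set iff for any two disjoint non-empty subsets `U, W` of `{1,...,n}`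
with `|U| = |W| ≤ k`, there is a vertex `X ∈ S` with `|X ∩ U| ≠ |X ∩ W|`. -/
theorem johnson_resolving_iff (n k : ℕ) (hk : 2 ≤ 2 * k) (hn : 2 * k ≤ n)
    (S : Set {s : Finset (Fin n) // s.card = k}) :
    resolvingSet (johnsonGraph n k) S ↔
      ∀ U W : Finset (Fin n), U.Nonempty → W.Nonempty → Disjoint U W →
        U.card = W.card → U.card ≤ k →
        ∃ X ∈ S, (X.1 ∩ U).card ≠ (X.1 ∩ W).card :=
  johnson_resolving_iff_general n k hn S
end

section
/- Let n and k be integers with ⌊5k/2⌋ ≤ n ≤ 3k−2 (so in particular k ≥ 4 and n > 2k). Then the metric dimension of the Kneser graph K(n,k) satisfies β(K(n,k)) ≤ 2 · C(n−k, k), where C(n−k,k) denotes the binomial coefficient. -/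
/-!
For two disjoint `k`-sets `A` and `B`, the neighbourhoods `N(A) ∪ N(B)`, each of size
`C(n - k, k)`, resolve `K(n,k)`. Distinct vertices `U ≠ W` differ outside `A` or outside `B`, say
`U \ A ≠ W \ A`, with some `a ∈ (U \ A) \ W`. A neighbour `X` of `A` meets `U` and `W` only in
`U \ A` and `W \ A`, and distances in `K(n,k)` are read off intersection sizes. If `U` or `W` is
itself disjoint from `A`, it serves as `X`, since `K(n,k)` is connected. If `W \ A` is small,
take `X ∋ a` disjoint from `W`: then `d(W,X) = 1 ≠ d(U,X)`. If `U \ A` and `W \ A` are both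
large, put into `X` a set `a ∈ T ⊆ U \ A` of size `3k - n` and fill `X` up avoiding `W` as far as
possible: then `d(U,X) = 2` while `|W ∩ X| < 3k - n` forces `d(W,X) ≠ 2`.
-/

open Finset

theorem eq_of_sdiff_eq_sdiff_of_disjoint {α : Type*} [GeneralizedBooleanAlgebra α]
    {a b s t : α} (hab : Disjoint a b) (ha : s \ a = t \ a) (hb : s \ b = t \ b) : s = t := by
  rw [← sdiff_bot (a := s), ← sdiff_bot (a := t), ← hab.eq_bot, sdiff_inf, sdiff_inf, ha, hb]

theorem Finset.exists_subsuperset_card_eq_card_inter_le {α : Type*} [DecidableEq α]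
    {s t u : Finset α} {m : ℕ} (hst : s ⊆ t) (hsm : #s ≤ m) (hmt : m ≤ #t) :
    ∃ x, s ⊆ x ∧ x ⊆ t ∧ #x = m ∧ #(x ∩ u) ≤ max #(s ∩ u) (m - #(t \ u)) := by
  by_cases hm : m ≤ #(s ∪ t \ u)
  · obtain ⟨x, hsx, hxt, hx⟩ := exists_subsuperset_card_eq subset_union_left hsm hm
    refine ⟨x, hsx, hxt.trans (union_subset hst sdiff_subset), hx,
      le_max_of_le_left (card_le_card fun b hb => ?_)⟩
    have := hxt (mem_inter.1 hb).1
    grind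
  · obtain ⟨x, hsx, hxt, hx⟩ :=
      exists_subsuperset_card_eq (s := s ∪ t \ u) (union_subset hst sdiff_subset) (by omega) hmt
    refine ⟨x, subset_union_left.trans hsx, hxt, hx, le_max_of_le_right ?_⟩
    have hdisj : Disjoint (x ∩ u) (t \ u) := disjoint_left.2 fun b hb hb' => by grind
    have := card_le_card
      (union_subset (inter_subset_left (s₂ := u)) (subset_union_right.trans hsx))
    rw [card_union_of_disjoint hdisj] at this
    omega

namespace SimpleGraph

variable {V : Type*} {G : SimpleGraph V} {u v : V}

theorem dist_eq_two_iff :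
    G.dist u v = 2 ↔ u ≠ v ∧ ¬G.Adj u v ∧ (G.commonNeighbors u v).Nonempty := by
  rw [dist, ENat.toNat_eq_iff two_ne_zero]
  exact edist_eq_two_iff

end SimpleGraph

theorem metricDim_le_card {V : Type*} {G : SimpleGraph V} {S : Finset V}
    (hS : resolvingSet G S) : metricDim G ≤ #S :=
  Nat.sInf_le ⟨S, hS, rfl⟩

section Kneser

open SimpleGraph

variable {n k : ℕ}

instance : DecidableRel (kneserGraph n k).Adj := fun U W =>
  inferInstanceAs (Decidable (U ≠ W ∧ Disjoint U.1 W.1))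

variable {A B U W : {s : Finset (Fin n) // s.card = k}}

theorem kneserGraph_adj_iff_s7 (hk : 0 < k) : (kneserGraph n k).Adj U W ↔ Disjoint U.1 W.1 := by
  refine ⟨And.right, fun h => ⟨?_, h⟩⟩
  rintro rfl
  rw [disjoint_self, bot_eq_empty, ← card_eq_zero, U.2] at h
  omega

theorem kneserGraph_commonNeighbors_nonempty_iff (hk : 0 < k) :
    ((kneserGraph n k).commonNeighbors U W).Nonempty ↔ 3 * k ≤ n + #(U.1 ∩ W.1) := by
  have hUW := card_union_add_card_inter U.1 W.1
  rw [U.2, W.2] at hUW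
  simp only [Set.Nonempty, mem_commonNeighbors, kneserGraph_adj_iff_s7 hk]
  constructor
  · rintro ⟨X, hUX, hWX⟩
    have hd : Disjoint X.1 (U.1 ∪ W.1) := disjoint_union_right.2 ⟨hUX.symm, hWX.symm⟩
    have := card_le_univ (X.1 ∪ (U.1 ∪ W.1))
    rw [card_union_of_disjoint hd, X.2, Fintype.card_fin] at this
    omega
  · intro h
    obtain ⟨X, hXUW, hX⟩ := exists_subset_card_eq (s := (U.1 ∪ W.1)ᶜ) (n := k)
      (by rw [card_compl, Fintype.card_fin]; omega)
    rw [subset_compl_iff_disjoint_right, disjoint_union_right] at hXUW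
    exact ⟨⟨X, hX⟩, hXUW.1.symm, hXUW.2.symm⟩

theorem kneserGraph_dist_eq_two_iff (hk : 0 < k) :
    (kneserGraph n k).dist U W = 2 ↔
      U ≠ W ∧ ¬Disjoint U.1 W.1 ∧ 3 * k ≤ n + #(U.1 ∩ W.1) := by
  rw [dist_eq_two_iff, kneserGraph_adj_iff_s7 hk, kneserGraph_commonNeighbors_nonempty_iff hk]

theorem kneserGraph_reachable (hk : 0 < k) (hn : 5 * k ≤ 2 * n + 1) (U W) :
    (kneserGraph n k).Reachable U W := by
  have reachable_of_le :
      ∀ {X Y}, 3 * k ≤ n + #(X.1 ∩ Y.1) → (kneserGraph n k).Reachable X Y := fun h => by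
      obtain ⟨Z, hZ⟩ := (kneserGraph_commonNeighbors_nonempty_iff hk).2 h
      rw [mem_commonNeighbors] at hZ
      exact hZ.1.reachable.trans hZ.2.reachable.symm
  by_cases h : 3 * k ≤ n + #(U.1 ∩ W.1)
  · exact reachable_of_le h
  -- Otherwise `|U ∩ W| ≤ n - 2k`, so a neighbour of `W` containing `U \ W` meets `U` in at least
  -- `3k - n` elements.
  have hUW := card_sdiff_add_card_inter U.1 W.1
  rw [U.2] at hUW
  obtain ⟨X, hUX, hXW, hX⟩ :=
    exists_subsuperset_card_eq (s := U.1 \ W.1) (t := W.1ᶜ) (n := k)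
      (subset_compl_iff_disjoint_right.2 disjoint_sdiff_self_left) (by omega)
      (by rw [card_compl, Fintype.card_fin, W.2]; omega)
  have hXadj : (kneserGraph n k).Adj ⟨X, hX⟩ W :=
    (kneserGraph_adj_iff_s7 hk).2 (subset_compl_iff_disjoint_right.1 hXW)
  have := card_le_card (subset_inter (sdiff_subset (t := W.1)) hUX)
  exact (reachable_of_le (Y := ⟨X, hX⟩) (by dsimp only; omega)).trans hXadj.reachable

theorem kneserGraph_degree (hk : 0 < k) (A : {s : Finset (Fin n) // s.card = k}) :
    (kneserGraph n k).degree A = (n - k).choose k := by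
  have hcard : (n - k).choose k = #(powersetCard k A.1ᶜ) := by
    rw [card_powersetCard, card_compl, Fintype.card_fin, A.2]
  rw [hcard, ← card_neighborFinset_eq_degree, ← card_map (Function.Embedding.subtype _)]
  congr 1
  ext s
  simp [mem_powersetCard, kneserGraph_adj_iff_s7 hk, subset_compl_iff_disjoint_right, disjoint_comm,
    and_comm]

theorem kneserGraph_exists_dist_ne_of_card_union_le (hUW : ¬U.1 \ A.1 ⊆ W.1 \ A.1)
    (hW : #(A.1 ∪ W.1) + k ≤ n) :
    ∃ X, Disjoint A.1 X.1 ∧ (kneserGraph n k).dist U X ≠ (kneserGraph n k).dist W X := by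
  obtain ⟨a, haUA, haWA⟩ := not_subset.1 hUW
  obtain ⟨haU, haA⟩ := mem_sdiff.1 haUA
  have haW : a ∉ W.1 := fun h => haWA (mem_sdiff.2 ⟨h, haA⟩)
  have hk : 0 < k := U.2 ▸ card_pos.2 ⟨a, haU⟩
  obtain ⟨X, haX, hXAW, hX⟩ :=
    exists_subsuperset_card_eq (s := {a}) (t := (A.1 ∪ W.1)ᶜ) (n := k)
      (singleton_subset_iff.2 (by simp [haA, haW])) (by rw [card_singleton]; omega)
      (by rw [card_compl, Fintype.card_fin]; omega)
  rw [singleton_subset_iff] at haX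
  rw [subset_compl_iff_disjoint_right, disjoint_union_right] at hXAW
  refine ⟨⟨X, hX⟩, hXAW.1.symm, ?_⟩
  have hWX : (kneserGraph n k).Adj W ⟨X, hX⟩ := (kneserGraph_adj_iff_s7 hk).2 hXAW.2.symm
  rw [dist_eq_one_iff_adj.2 hWX, Ne, dist_eq_one_iff_adj, kneserGraph_adj_iff_s7 hk]
  exact not_disjoint_iff.2 ⟨a, haU, haX⟩

theorem kneserGraph_exists_dist_ne_of_le_card_sdiff (hn : n < 3 * k)
    (hUW : ¬U.1 \ A.1 ⊆ W.1 \ A.1) (hU : 3 * k ≤ n + #(U.1 \ A.1))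
    (hUA : ¬Disjoint A.1 U.1) (hWA : ¬Disjoint A.1 W.1) :
    ∃ X, Disjoint A.1 X.1 ∧ (kneserGraph n k).dist U X ≠ (kneserGraph n k).dist W X := by
  obtain ⟨a, haUA, haWA⟩ := not_subset.1 hUW
  have haU := (mem_sdiff.1 haUA).1
  have haW : a ∉ W.1 := fun h => haWA (mem_sdiff.2 ⟨h, (mem_sdiff.1 haUA).2⟩)
  have hk : 0 < k := by omega
  have hnk : 2 * k ≤ n := by
    have := card_le_card (sdiff_subset (s := U.1) (t := A.1))
    rw [U.2] at this
    omega
  have hWcard : #(A.1 ∪ W.1) < 2 * k := by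
    have hAW := card_union_add_card_inter A.1 W.1
    rw [A.2, W.2] at hAW
    have := card_pos.2 (not_disjoint_iff_nonempty_inter.1 hWA)
    omega
  obtain ⟨T, haT, hTUA, hT⟩ := exists_subsuperset_card_eq (n := 3 * k - n)
    (singleton_subset_iff.2 haUA) (by rw [card_singleton]; omega) (by omega)
  rw [singleton_subset_iff] at haT
  have hTW : #(T ∩ W.1) < #T :=
    card_lt_card ⟨inter_subset_left, fun h => haW (mem_inter.1 (h haT)).2⟩
  have hUAc : U.1 \ A.1 ⊆ A.1ᶜ := subset_compl_iff_disjoint_right.2 disjoint_sdiff_self_left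
  obtain ⟨X, hTX, hXA, hX, hXW⟩ := exists_subsuperset_card_eq_card_inter_le (u := W.1) (m := k)
    (hTUA.trans hUAc) (by omega) (by rw [card_compl, Fintype.card_fin, A.2]; omega)
  have hAcW : #(A.1ᶜ \ W.1) = n - #(A.1 ∪ W.1) := by
    rw [sdiff_eq_inter_compl, ← compl_union, card_compl, Fintype.card_fin]
  rw [subset_compl_iff_disjoint_right] at hXA
  refine ⟨⟨X, hX⟩, hXA.symm, ?_⟩
  have hUX : (kneserGraph n k).dist U ⟨X, hX⟩ = 2 := by
    refine (kneserGraph_dist_eq_two_iff hk).2 ⟨?_, not_disjoint_iff.2 ⟨a, haU, hTX haT⟩, ?_⟩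
    · rintro rfl
      exact hUA hXA.symm
    · have := card_le_card (subset_inter (hTUA.trans sdiff_subset) hTX)
      dsimp only
      omega
  have hWX : (kneserGraph n k).dist W ⟨X, hX⟩ ≠ 2 := by
    rw [Ne, kneserGraph_dist_eq_two_iff hk, inter_comm]
    dsimp only
    omega
  rw [hUX]
  exact fun h => hWX h.symm

theorem kneserGraph_exists_adj_dist_ne (h₁ : 5 * k ≤ 2 * n + 1) (h₂ : n < 3 * k)
    (h : U.1 \ A.1 ≠ W.1 \ A.1) :
    ∃ X, (kneserGraph n k).Adj A X ∧
      (kneserGraph n k).dist U X ≠ (kneserGraph n k).dist W X := by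
  have hk : 0 < k := by omega
  suffices ∃ X, Disjoint A.1 X.1 ∧ (kneserGraph n k).dist U X ≠ (kneserGraph n k).dist W X by
    simpa only [kneserGraph_adj_iff_s7 hk] using this
  wlog hUW : ¬U.1 \ A.1 ⊆ W.1 \ A.1 generalizing U W
  · obtain ⟨X, hAX, hX⟩ := this h.symm fun hWU => h (subset_antisymm (not_not.1 hUW) hWU)
    exact ⟨X, hAX, hX.symm⟩
  have hne : U ≠ W := by rintro rfl; exact h rfl
  by_cases hUA : Disjoint A.1 U.1
  · refine ⟨U, hUA, ?_⟩
    rw [dist_self]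
    exact ((kneserGraph_reachable hk h₁ W U).pos_dist_of_ne hne.symm).ne
  by_cases hWA : Disjoint A.1 W.1
  · refine ⟨W, hWA, ?_⟩
    rw [dist_self]
    exact ((kneserGraph_reachable hk h₁ U W).pos_dist_of_ne hne).ne'
  by_cases hW : #(A.1 ∪ W.1) + k ≤ n
  · exact kneserGraph_exists_dist_ne_of_card_union_le hUW hW
  have hUcard := card_sdiff_add_card U.1 A.1
  have hWcard := card_sdiff_add_card W.1 A.1
  rw [union_comm] at hUcard hWcard
  by_cases hU : #(A.1 ∪ U.1) + k ≤ n
  · have hWU : ¬W.1 \ A.1 ⊆ U.1 \ A.1 := fun hWU => by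
      have := card_le_card hWU
      omega
    obtain ⟨X, hAX, hX⟩ := kneserGraph_exists_dist_ne_of_card_union_le hWU hU
    exact ⟨X, hAX, hX.symm⟩
  exact kneserGraph_exists_dist_ne_of_le_card_sdiff h₂ hUW (by omega) hUA hWA

theorem kneserGraph_resolvingSet_neighborFinset_union (h₁ : 5 * k ≤ 2 * n + 1) (h₂ : n < 3 * k)
    (hAB : (kneserGraph n k).Adj A B) :
    resolvingSet (kneserGraph n k)
      ↑((kneserGraph n k).neighborFinset A ∪ (kneserGraph n k).neighborFinset B) := by
  intro U W hUW
  have h : U.1 \ A.1 ≠ W.1 \ A.1 ∨ U.1 \ B.1 ≠ W.1 \ B.1 := by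
    contrapose! hUW
    exact Subtype.ext (eq_of_sdiff_eq_sdiff_of_disjoint hAB.2 hUW.1 hUW.2)
  rcases h with h | h
  · obtain ⟨X, hAX, hX⟩ := kneserGraph_exists_adj_dist_ne h₁ h₂ h
    exact ⟨X, by simp [hAX], hX⟩
  · obtain ⟨X, hBX, hX⟩ := kneserGraph_exists_adj_dist_ne h₁ h₂ h
    exact ⟨X, by simp [hBX], hX⟩

theorem kneserGraph_exists_adj (hk : 0 < k) (hn : 2 * k ≤ n) :
    ∃ A B : {s : Finset (Fin n) // s.card = k}, (kneserGraph n k).Adj A B := by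
  obtain ⟨A, -, hA⟩ := exists_subset_card_eq (s := (univ : Finset (Fin n))) (n := k)
    (by rw [card_univ, Fintype.card_fin]; omega)
  obtain ⟨B, hBA, hB⟩ := exists_subset_card_eq (s := Aᶜ) (n := k)
    (by rw [card_compl, Fintype.card_fin, hA]; omega)
  exact ⟨⟨A, hA⟩, ⟨B, hB⟩, (kneserGraph_adj_iff_s7 hk).2 (subset_compl_iff_disjoint_left.1 hBA)⟩

end Kneser

/-- For `⌊5k/2⌋ ≤ n ≤ 3k−2`, the metric dimension of the Kneser graph `K(n,k)`
satisfies `β(K(n,k)) ≤ 2·C(n−k,k)`. -/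
theorem kneser_metricDim_le_diam3 (n k : ℕ) (h1 : 5 * k / 2 ≤ n) (h2 : n ≤ 3 * k - 2) :
    metricDim (kneserGraph n k) ≤ 2 * Nat.choose (n - k) k := by
  rcases k.eq_zero_or_pos with rfl | hk
  · have hS :
        resolvingSet (kneserGraph n 0) ↑(∅ : Finset {s : Finset (Fin n) // s.card = 0}) :=
      fun U W hUW => (hUW (Subtype.ext (by rw [card_eq_zero.1 U.2, card_eq_zero.1 W.2]))).elim
    exact (metricDim_le_card hS).trans (Nat.zero_le _)
  obtain ⟨A, B, hAB⟩ := kneserGraph_exists_adj (n := n) hk (by omega)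
  calc metricDim (kneserGraph n k)
      ≤ #((kneserGraph n k).neighborFinset A ∪ (kneserGraph n k).neighborFinset B) :=
        metricDim_le_card <|
          kneserGraph_resolvingSet_neighborFinset_union (by omega) (by omega) hAB
    _ ≤ (kneserGraph n k).degree A + (kneserGraph n k).degree B := card_union_le _ _
    _ = 2 * (n - k).choose k := by rw [kneserGraph_degree hk, kneserGraph_degree hk, two_mul]
end

section
/- Let s, t, α be positive integers with t > s, and let (P, L) be a partial geometry with parameters (s,t,α): P is a finite point set, L is a family of (s+1)-element subsets of P (lines) such that any two distinct lines intersect in at most one point, every point lies on exactly t+1 lines, any two distinct points lie on at most one common line, and for every non-incident point–line pair (p, M) exactly α points of M are collinear with p. Let v = |P| (so v = (s+1)(st+α)/α, and v > 2(s+1)). Then L is a resolving set for the Kneser graph K(v, s+1) whose vertex set is the set of (s+1)-element subsets of P. -/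
/-!
Given distinct `(s+1)`-sets `U ≠ W`, pick a point `p ∈ U \ W`. The `t + 1 > s + 1 = |W|` lines
through `p` meet pairwise only in `p ∉ W`, so their traces on `W` are disjoint and, by
pigeonhole, one of them misses `W`. That line `M` is adjacent to `W` in the Kneser graph but
not to `U`, so `d(W, M) = 1 ≠ d(U, M)`.
-/

/-- The Kneser graph `K(n,k)` on a ground set `X`: vertices are the `k`-element
subsets of `X`, two vertices adjacent iff the corresponding subsets are disjoint. -/
def kneserGraphOn (X : Type*) [DecidableEq X] (k : ℕ) :
    SimpleGraph {s : Finset X // s.card = k} where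
  Adj U W := U ≠ W ∧ Disjoint U.1 W.1
  symm := by
    constructor
    intro U W h
    exact ⟨h.1.symm, h.2.symm⟩
  loopless := by
    constructor
    intro U h
    exact h.1 rfl

theorem Finset.exists_disjoint_of_pairwiseDisjoint_inter {α : Type*} [DecidableEq α]
    {F : Finset (Finset α)} {W : Finset α}
    (hF : (F : Set (Finset α)).PairwiseDisjoint (· ∩ W)) (hcard : W.card < F.card) :
    ∃ M ∈ F, Disjoint M W := by
  by_contra! hmeet
  have hne : ∀ M ∈ F, (M ∩ W).Nonempty := fun M hM =>
    Finset.not_disjoint_iff_nonempty_inter.mp (hmeet M hM)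
  have hle : F.card ≤ W.card :=
    (Finset.card_le_card_biUnion hF hne).trans
      (Finset.card_le_card (Finset.biUnion_subset.mpr fun _ _ => Finset.inter_subset_right))
  omega

theorem pairwiseDisjoint_inter_of_lines_through {P : Type*} [DecidableEq P]
    {L : Finset (Finset P)} (hll : ∀ M ∈ L, ∀ N ∈ L, M ≠ N → (M ∩ N).card ≤ 1)
    {p : P} {W : Finset P} (hpW : p ∉ W) :
    ((L.filter (p ∈ ·) : Finset (Finset P)) : Set (Finset P)).PairwiseDisjoint (· ∩ W) := by
  intro M hM N hN hMN
  simp only [Finset.coe_filter, Set.mem_ofPred_eq] at hM hN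
  refine Finset.disjoint_left.mpr fun x hxM hxN => ?_
  rw [Finset.mem_inter] at hxM hxN
  have hxp : x = p := Finset.card_le_one.mp (hll M hM.1 N hN.1 hMN) x
    (Finset.mem_inter.mpr ⟨hxM.1, hxN.1⟩) p (Finset.mem_inter.mpr ⟨hM.2, hN.2⟩)
  exact hpW (hxp ▸ hxM.2)

theorem exists_line_through_disjoint {P : Type*} [DecidableEq P]
    {L : Finset (Finset P)} (hll : ∀ M ∈ L, ∀ N ∈ L, M ≠ N → (M ∩ N).card ≤ 1)
    {p : P} {W : Finset P} (hpW : p ∉ W) (hcard : W.card < (L.filter (p ∈ ·)).card) :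
    ∃ M ∈ L, p ∈ M ∧ Disjoint M W := by
  obtain ⟨M, hM, hMW⟩ := Finset.exists_disjoint_of_pairwiseDisjoint_inter
    (pairwiseDisjoint_inter_of_lines_through hll hpW) hcard
  exact ⟨M, (Finset.mem_filter.mp hM).1, (Finset.mem_filter.mp hM).2, hMW⟩

theorem kneserGraphOn_adj_iff {X : Type*} [DecidableEq X] {k : ℕ}
    {U W : {s : Finset X // s.card = k + 1}} :
    (kneserGraphOn X (k + 1)).Adj U W ↔ Disjoint U.1 W.1 := by
  refine ⟨And.right, fun hUW => ⟨fun h => ?_, hUW⟩⟩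
  have hU : U.1 = ∅ := Finset.disjoint_self_iff_empty U.1 |>.mp (h ▸ hUW)
  simpa [hU] using U.2

theorem resolvingSet_of_exists_adj_not_adj {V : Type*} {G : SimpleGraph V} {S : Set V}
    (h : ∀ u v : V, u ≠ v → ∃ x ∈ S, ¬ G.Adj u x ∧ G.Adj v x) : resolvingSet G S := by
  intro u v huv
  obtain ⟨x, hxS, hux, hvx⟩ := h u v huv
  refine ⟨x, hxS, ?_⟩
  rw [SimpleGraph.dist_eq_one_iff_adj.mpr hvx]
  exact fun hu => hux (SimpleGraph.dist_eq_one_iff_adj.mp hu)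

theorem partial_geometry_resolving_kneser_general
    (P : Type*) [DecidableEq P] (s t : ℕ)
    (hts : s < t)
    (L : Finset (Finset P))
    -- every line has `s+1` points
    (hline : ∀ M ∈ L, M.card = s + 1)
    -- two distinct lines meet in at most one point
    (hll : ∀ M ∈ L, ∀ N ∈ L, M ≠ N → (M ∩ N).card ≤ 1)
    -- every point lies on exactly `t+1` lines
    (hpt : ∀ p : P, (L.filter (fun M => p ∈ M)).card = t + 1) :
    resolvingSet (kneserGraphOn P (s + 1)) {X | X.1 ∈ L} := by
  refine resolvingSet_of_exists_adj_not_adj fun U W hUW => ?_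
  obtain ⟨p, hpU, hpW⟩ : ∃ p ∈ U.1, p ∉ W.1 := Finset.not_subset.mp fun hsub =>
    hUW (Subtype.ext (Finset.eq_of_subset_of_card_le hsub (by rw [U.2, W.2])))
  obtain ⟨M, hML, hpM, hMW⟩ :=
    exists_line_through_disjoint hll hpW (by rw [hpt p, W.2]; omega)
  refine ⟨⟨M, hline M hML⟩, hML, ?_, ?_⟩
  · rw [kneserGraphOn_adj_iff]
    exact Finset.not_disjoint_iff.mpr ⟨p, hpU, hpM⟩
  · exact kneserGraphOn_adj_iff.mpr hMW.symm

/-- The lines of a partial geometry `pg(s,t,α)` with `t > s` form a resolving set for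
the Kneser graph `K(v, s+1)` on the point set, where `v` is the number of points. -/
theorem partial_geometry_resolving_kneser
    (P : Type*) [Fintype P] [DecidableEq P] (s t α : ℕ)
    (hs : 1 ≤ s) (ht : 1 ≤ t) (hα : 1 ≤ α) (hts : s < t)
    (L : Finset (Finset P))
    -- every line has `s+1` points
    (hline : ∀ M ∈ L, M.card = s + 1)
    -- two distinct lines meet in at most one point
    (hll : ∀ M ∈ L, ∀ N ∈ L, M ≠ N → (M ∩ N).card ≤ 1)
    -- every point lies on exactly `t+1` lines
    (hpt : ∀ p : P, (L.filter (fun M => p ∈ M)).card = t + 1)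
    -- two distinct points lie on at most one common line
    (hpp : ∀ p q : P, p ≠ q → (L.filter (fun M => p ∈ M ∧ q ∈ M)).card ≤ 1)
    -- for a non-incident point-line pair `(p, M)`, exactly `α` points of `M`
    -- are collinear with `p`
    (hpg : ∀ p : P, ∀ M ∈ L, p ∉ M →
      (M.filter (fun x => ∃ N ∈ L, p ∈ N ∧ x ∈ N)).card = α)
    -- `v = (s+1)(st+α)/α`
    (hv : α * Fintype.card P = (s + 1) * (s * t + α))
    -- `v > 2(s+1)`
    (hv2 : 2 * (s + 1) < Fintype.card P) :
    resolvingSet (kneserGraphOn P (s + 1)) {X | X.1 ∈ L} :=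
  partial_geometry_resolving_kneser_general P s t hts L hline hll hpt
end

section
/- Let q > 2 be an integer and let (P, L) be a finite projective plane of order q: P is a point set with |P| = q²+q+1, L is a family of (q+1)-element subsets of P (lines) such that any two distinct points lie on exactly one common line and any two distinct lines intersect in exactly one point. Then L is NOT a resolving set for the Kneser graph K(q²+q+1, q+1) on the point set P. -/
/-!
Fix a line `M`, a point `a ∈ M`, a second line `T` through `a`, and two points `p ≠ p'` of
`T` other than `a`. The vertices `(M \ {a}) ∪ {p}` and `(M \ {a}) ∪ {p'}` are not lines,
and no line can tell them apart: a line missing `M \ {a}` must pass through `a`, and a line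
through `a` contains `p` iff it is `T` iff it contains `p'`. Since `3k ≤ n + 1` in
`K(q²+q+1, q+1)` for `q > 2`, the distance between distinct vertices is `1` or `2`
according as they are disjoint or not, so both vertices have the same distance to every line.
-/

namespace kneserGraphOn

variable {X : Type*} [DecidableEq X] {k : ℕ}

theorem adj_iff {U W : {s : Finset X // s.card = k}} :
    (kneserGraphOn X k).Adj U W ↔ U ≠ W ∧ Disjoint U.1 W.1 :=
  Iff.rfl

variable [Fintype X]

theorem dist_eq_two_of_not_disjoint (hk : 3 * k ≤ Fintype.card X + 1)
    {A B : {s : Finset X // s.card = k}} (hAB : A ≠ B) (hAB' : ¬ Disjoint A.1 B.1) :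
    (kneserGraphOn X k).dist A B = 2 := by
  have hunion : (A.1 ∪ B.1).card + 1 ≤ 2 * k := by
    have := Finset.card_union_add_card_inter A.1 B.1
    have := (Finset.not_disjoint_iff_nonempty_inter.mp hAB').card_pos
    rw [A.2, B.2] at *
    omega
  have hcompl : k ≤ (A.1 ∪ B.1)ᶜ.card := by
    rw [Finset.card_compl]
    omega
  obtain ⟨W, hW, hWcard⟩ := Finset.exists_subset_card_eq hcompl
  rw [Finset.subset_compl_comm, Finset.compl_eq_univ_sdiff, Finset.subset_sdiff] at hW
  have hAW : Disjoint A.1 W := Finset.disjoint_of_subset_left Finset.subset_union_left hW.2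
  have hBW : Disjoint B.1 W := Finset.disjoint_of_subset_left Finset.subset_union_right hW.2
  have hcommon : ⟨W, hWcard⟩ ∈ (kneserGraphOn X k).commonNeighbors A B := by
    refine (SimpleGraph.mem_commonNeighbors _).mpr ⟨adj_iff.mpr ⟨?_, hAW⟩, adj_iff.mpr ⟨?_, hBW⟩⟩
      <;> rintro rfl
    · exact hAB' (Finset.disjoint_self_iff_empty _ |>.mp hAW ▸ Finset.disjoint_empty_left _)
    · exact hAB' (Finset.disjoint_self_iff_empty _ |>.mp hBW ▸ Finset.disjoint_empty_right _)
  have hedist : (kneserGraphOn X k).edist A B = 2 :=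
    SimpleGraph.edist_eq_two_iff.mpr ⟨hAB, fun h ↦ hAB' (adj_iff.mp h).2, ⟨_, hcommon⟩⟩
  simp [SimpleGraph.dist, hedist]

theorem dist_eq_of_disjoint_iff (hk : 3 * k ≤ Fintype.card X + 1)
    {U V x : {s : Finset X // s.card = k}} (hU : U ≠ x) (hV : V ≠ x)
    (h : Disjoint U.1 x.1 ↔ Disjoint V.1 x.1) :
    (kneserGraphOn X k).dist U x = (kneserGraphOn X k).dist V x := by
  by_cases hUx : Disjoint U.1 x.1
  · rw [SimpleGraph.dist_eq_one_iff_adj.mpr (adj_iff.mpr ⟨hU, hUx⟩),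
      SimpleGraph.dist_eq_one_iff_adj.mpr (adj_iff.mpr ⟨hV, h.mp hUx⟩)]
  · rw [dist_eq_two_of_not_disjoint hk hU hUx,
      dist_eq_two_of_not_disjoint hk hV (h.not.mp hUx)]

end kneserGraphOn

theorem Finset.card_insert_erase {α : Type*} [DecidableEq α] {s : Finset α} {a b : α}
    (ha : a ∈ s) (hb : b ∉ s) : (insert b (s.erase a)).card = s.card := by
  rw [Finset.card_insert_of_notMem (fun h ↦ hb (Finset.mem_of_mem_erase h)),
    Finset.card_erase_add_one ha]

section ProjectivePlane

variable {P : Type*} {L : Finset (Finset P)} {M N T : Finset P} {a x y : P}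

theorem line_eq_of_mem_of_mem (hpp : ∀ p₁ p₂ : P, p₁ ≠ p₂ → ∃! M, M ∈ L ∧ p₁ ∈ M ∧ p₂ ∈ M)
    (hM : M ∈ L) (hN : N ∈ L) (hxy : x ≠ y) (hxM : x ∈ M) (hyM : y ∈ M) (hxN : x ∈ N)
    (hyN : y ∈ N) : M = N :=
  (hpp x y hxy).unique ⟨hM, hxM, hyM⟩ ⟨hN, hxN, hyN⟩

theorem exists_two_lines_through_point [Fintype P]
    (hpp : ∀ p₁ p₂ : P, p₁ ≠ p₂ → ∃! M, M ∈ L ∧ p₁ ∈ M ∧ p₂ ∈ M)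
    (hproper : ∀ M ∈ L, M.card < Fintype.card P) (hP : 1 < Fintype.card P) :
    ∃ M ∈ L, ∃ T ∈ L, M ≠ T ∧ ∃ a, a ∈ M ∧ a ∈ T := by
  obtain ⟨a, b, hab⟩ := Fintype.exists_pair_of_one_lt_card hP
  obtain ⟨M, ⟨hM, haM, -⟩, -⟩ := hpp a b hab
  obtain ⟨c, -, hc⟩ := Finset.exists_mem_notMem_of_card_lt_card (t := Finset.univ) (hproper M hM)
  obtain ⟨T, ⟨hT, haT, hcT⟩, -⟩ := hpp a c (fun h ↦ hc (h ▸ haM))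
  exact ⟨M, hM, T, hT, fun h ↦ hc (h ▸ hcT), a, haM, haT⟩

variable [DecidableEq P]

theorem notMem_line_of_mem_erase (hpp : ∀ p₁ p₂ : P, p₁ ≠ p₂ → ∃! M, M ∈ L ∧ p₁ ∈ M ∧ p₂ ∈ M)
    (hM : M ∈ L) (hT : T ∈ L) (hMT : M ≠ T) (haM : a ∈ M) (haT : a ∈ T) (hx : x ∈ T.erase a) :
    x ∉ M :=
  fun hxM ↦ hMT <| line_eq_of_mem_of_mem hpp hM hT (Finset.ne_of_mem_erase hx) hxM haM
    (Finset.mem_of_mem_erase hx) haT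

theorem mem_line_of_disjoint_erase (hll : ∀ M ∈ L, ∀ N ∈ L, M ≠ N → (M ∩ N).card = 1)
    (hM : M ∈ L) (hN : N ∈ L) (hMN : M ≠ N) (h : Disjoint (M.erase a) N) : a ∈ N := by
  obtain ⟨w, hw⟩ := Finset.card_eq_one.mp (hll M hM N hN hMN)
  have hwMN : w ∈ M ∩ N := hw ▸ Finset.mem_singleton_self w
  rw [Finset.mem_inter] at hwMN
  obtain rfl : w = a := by
    by_contra hwa
    exact Finset.disjoint_left.mp h (Finset.mem_erase_of_ne_of_mem hwa hwMN.1) hwMN.2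
  exact hwMN.2

theorem insert_erase_notMem_lines (hll : ∀ M ∈ L, ∀ N ∈ L, M ≠ N → (M ∩ N).card = 1)
    (hM : M ∈ L) (hM2 : 2 < M.card) (hx : x ∉ M) : insert x (M.erase a) ∉ L := by
  intro hxL
  have hne : insert x (M.erase a) ≠ M := fun h ↦ hx (h ▸ Finset.mem_insert_self x _)
  have hsub : M.erase a ⊆ insert x (M.erase a) ∩ M :=
    Finset.subset_inter (Finset.subset_insert x _) (Finset.erase_subset a M)
  have := (Finset.pred_card_le_card_erase (a := a)).trans (Finset.card_le_card hsub)
  rw [hll _ hxL M hM hne] at this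
  omega

theorem disjoint_insert_erase_iff (hpp : ∀ p₁ p₂ : P, p₁ ≠ p₂ → ∃! M, M ∈ L ∧ p₁ ∈ M ∧ p₂ ∈ M)
    (hll : ∀ M ∈ L, ∀ N ∈ L, M ≠ N → (M ∩ N).card = 1)
    (hM : M ∈ L) (hT : T ∈ L) (hN : N ∈ L) (hMT : M ≠ T) (haM : a ∈ M) (haT : a ∈ T)
    (hx : x ∈ T.erase a) (hy : y ∈ T.erase a) :
    Disjoint (insert x (M.erase a)) N ↔ Disjoint (insert y (M.erase a)) N := by
  simp only [Finset.disjoint_insert_left]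
  refine and_congr_left fun h ↦ not_congr ?_
  have mem_of_mem : ∀ {u v}, u ∈ T.erase a → v ∈ T.erase a → u ∈ N → v ∈ N := by
    intro u v hu hv huN
    by_cases hNM : N = M
    · exact absurd (hNM ▸ huN) (notMem_line_of_mem_erase hpp hM hT hMT haM haT hu)
    have haN := mem_line_of_disjoint_erase hll hM hN (Ne.symm hNM) h
    rw [line_eq_of_mem_of_mem hpp hN hT (Finset.ne_of_mem_erase hu) huN haN
      (Finset.mem_of_mem_erase hu) haT]
    exact Finset.mem_of_mem_erase hv
  exact ⟨mem_of_mem hx hy, mem_of_mem hy hx⟩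

end ProjectivePlane

/-- For a finite projective plane of order `q > 2`, the set of lines is NOT a
resolving set for the Kneser graph `K(q²+q+1, q+1)` on the point set. -/
theorem projective_plane_not_resolving_kneser
    (q : ℕ) (hq : 2 < q) (P : Type*) [Fintype P] [DecidableEq P]
    (hP : Fintype.card P = q ^ 2 + q + 1)
    (L : Finset (Finset P))
    -- every line has `q+1` points
    (hline : ∀ M ∈ L, M.card = q + 1)
    -- two distinct points lie on exactly one common line
    (hpp : ∀ p₁ p₂ : P, p₁ ≠ p₂ → ∃! M, M ∈ L ∧ p₁ ∈ M ∧ p₂ ∈ M)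
    -- two distinct lines meet in exactly one point
    (hll : ∀ M ∈ L, ∀ N ∈ L, M ≠ N → (M ∩ N).card = 1) :
    ¬ resolvingSet (kneserGraphOn P (q + 1)) {X | X.1 ∈ L} := by
  have hproper : ∀ M ∈ L, M.card < Fintype.card P := fun M hM ↦ by
    rw [hline M hM, hP]; nlinarith
  obtain ⟨M, hM, T, hT, hMT, a, haM, haT⟩ :=
    exists_two_lines_through_point hpp hproper (by rw [hP]; nlinarith)
  obtain ⟨p, hp, p', hp', hpp'⟩ := Finset.one_lt_card.mp <| show 1 < (T.erase a).card by
    rw [Finset.card_erase_of_mem haT, hline T hT]; omega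
  have hoff : ∀ x ∈ T.erase a, x ∉ M := fun x ↦ notMem_line_of_mem_erase hpp hM hT hMT haM haT
  let vertex (x : P) (hx : x ∈ T.erase a) : {s : Finset P // s.card = q + 1} :=
    ⟨insert x (M.erase a), by rw [Finset.card_insert_erase haM (hoff x hx), hline M hM]⟩
  have vertex_ne (x hx) {N : {s : Finset P // s.card = q + 1}} (hN : N.1 ∈ L) : vertex x hx ≠ N :=
    fun h ↦ insert_erase_notMem_lines hll hM (by rw [hline M hM]; omega) (hoff x hx) (h ▸ hN)
  intro hres
  obtain ⟨N, hN, hdist⟩ := hres (vertex p hp) (vertex p' hp') fun h ↦ hpp' <|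
    (Finset.insert_inj fun h ↦ hoff p hp (Finset.mem_of_mem_erase h)).mp (congrArg Subtype.val h)
  exact hdist <| kneserGraphOn.dist_eq_of_disjoint_iff (by rw [hP]; nlinarith)
    (vertex_ne p hp hN) (vertex_ne p' hp' hN)
    (disjoint_insert_erase_iff hpp hll hM hT hN hMT haM haT hp hp')
end

section
/- Let a, b ≥ 10 be integers and n = ab. Identify the n-element set with V = (ℤ/aℤ) × (ℤ/bℤ). Then the collection of all straight paths with 4 vertices in the toroidal grid C_a □ C_b — i.e., all sets of the form {(x+i, y) : i = 0,1,2,3} or {(x, y+j) : j = 0,1,2,3} for (x,y) ∈ V — is a resolving set for the Kneser graph K(n,4) on the ground set V. Consequently β(K(n,4)) ≤ 2n for such n. -/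
/-!
A straight path disjoint from one vertex of `K(n,4)` and meeting the other is adjacent to the
first only, so it resolves the pair. It thus suffices that distinct 4-sets `U`, `V` never meet
exactly the same straight paths. Suppose they do, and take `p ∈ U \ V`. The four paths starting
or ending at `p` all meet `V`, and since the windows `[x, x + 3]` and `[x - 3, x]` of `ℤ/mℤ` share
only `x` when `m ≥ 7`, this yields four distinct points: `V` lies on the row and column of `p`.
Now take `q ∈ V \ U`, say in the column of `p`. The horizontal path starting at `q` meets `U` at a
point `u` off that column; the vertical paths starting and ending at `u` meet `V`, hence meet the
row of `p` in windows starting and ending at the row of `q`, which forces `q = p`.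
-/

open Finset

section Kneser

variable {X : Type*} [DecidableEq X] {k : ℕ}

lemma kneserGraphOn_dist_ne_of_disjoint {U V P : {s : Finset X // s.card = k}}
    (hU : Disjoint P.1 U.1) (hV : ¬Disjoint P.1 V.1) :
    (kneserGraphOn X k).dist U P ≠ (kneserGraphOn X k).dist V P := by
  have hUP : U ≠ P := by
    rintro rfl
    obtain ⟨x, hxU, -⟩ := not_disjoint_iff.1 hV
    exact disjoint_left.1 hU hxU hxU
  have hadj : (kneserGraphOn X k).Adj U P := ⟨hUP, hU.symm⟩
  rw [SimpleGraph.dist_eq_one_iff_adj.2 hadj, ne_comm, Ne, SimpleGraph.dist_eq_one_iff_adj]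
  exact fun hadj' => hV hadj'.2.symm

lemma resolvingSet_kneserGraphOn {S : Set {s : Finset X // s.card = k}}
    (h : ∀ U V : {s : Finset X // s.card = k}, U ≠ V →
      ∃ P ∈ S, ¬(Disjoint P.1 U.1 ↔ Disjoint P.1 V.1)) :
    resolvingSet (kneserGraphOn X k) S := by
  intro U V hUV
  obtain ⟨P, hPS, hP⟩ := h U V hUV
  refine ⟨P, hPS, ?_⟩
  by_cases hU : Disjoint P.1 U.1
  · exact kneserGraphOn_dist_ne_of_disjoint hU fun hV => hP (iff_of_true hU hV)
  · have hV : Disjoint P.1 V.1 := by tauto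
    exact (kneserGraphOn_dist_ne_of_disjoint hV hU).symm

end Kneser

lemma metricDim_le_ncard {V : Type*} {G : SimpleGraph V} {S : Set V} (hS : resolvingSet G S)
    (hfin : S.Finite) : metricDim G ≤ S.ncard :=
  Nat.sInf_le ⟨hfin.toFinset, by simpa using hS, (Set.ncard_eq_toFinset_card S hfin).symm⟩

namespace ToroidalGrid

section Window

variable {m : ℕ} {x y : ZMod m}

def window (x : ZMod m) : Finset (ZMod m) :=
  univ.image fun i : Fin 4 => x + (i : ℕ)

@[simp]
lemma mem_window : y ∈ window x ↔ ∃ i : Fin 4, x + (i : ℕ) = y := by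
  simp [window]

lemma self_mem_window : x ∈ window x :=
  mem_window.2 ⟨0, by simp⟩

lemma self_mem_window_sub_three : x ∈ window (x - 3) :=
  mem_window.2 ⟨3, by simp⟩

lemma card_window (hm : 4 ≤ m) (x : ZMod m) : (window x).card = 4 := by
  rw [window, card_image_of_injective _ fun i j hij => ?_, card_univ, Fintype.card_fin]
  have hij : ((i : ℕ) : ZMod m) = (j : ℕ) := add_left_cancel hij
  rw [ZMod.natCast_eq_natCast_iff', Nat.mod_eq_of_lt (by omega), Nat.mod_eq_of_lt (by omega)]
    at hij
  exact Fin.ext hij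

lemma eq_of_mem_window_of_mem_window_sub_three (hm : 7 ≤ m) (h : y ∈ window x)
    (h' : y ∈ window (x - 3)) : y = x := by
  obtain ⟨i, rfl⟩ := mem_window.1 h
  obtain ⟨j, hj⟩ := mem_window.1 h'
  have hzero : (((i : ℕ) + (3 - (j : ℕ)) : ℕ) : ZMod m) = 0 := by
    rw [Nat.cast_add, Nat.cast_sub (by omega)]
    linear_combination -hj
  rw [ZMod.natCast_eq_zero_iff] at hzero
  have hi : (i : ℕ) = 0 := by have := Nat.eq_zero_of_dvd_of_lt hzero (by omega); omega
  simp [hi]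

end Window

variable {a b : ℕ}

def horizontalPath (x : ZMod a) (y : ZMod b) : Finset (ZMod a × ZMod b) :=
  univ.image fun i : Fin 4 => (x + (i : ℕ), y)

def verticalPath (x : ZMod a) (y : ZMod b) : Finset (ZMod a × ZMod b) :=
  univ.image fun j : Fin 4 => (x, y + (j : ℕ))

lemma horizontalPath_eq (x : ZMod a) (y : ZMod b) : horizontalPath x y = window x ×ˢ {y} := by
  ext ⟨s, t⟩
  simp [horizontalPath, and_comm, eq_comm]

lemma verticalPath_eq (x : ZMod a) (y : ZMod b) : verticalPath x y = {x} ×ˢ window y := by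
  ext ⟨s, t⟩
  simp [verticalPath, and_comm, eq_comm]

lemma mem_horizontalPath {x : ZMod a} {y : ZMod b} {z : ZMod a × ZMod b} :
    z ∈ horizontalPath x y ↔ z.1 ∈ window x ∧ z.2 = y := by
  rw [horizontalPath_eq, mem_product, mem_singleton]

lemma mem_verticalPath {x : ZMod a} {y : ZMod b} {z : ZMod a × ZMod b} :
    z ∈ verticalPath x y ↔ z.1 = x ∧ z.2 ∈ window y := by
  rw [verticalPath_eq, mem_product, mem_singleton]

lemma card_horizontalPath (ha : 4 ≤ a) (x : ZMod a) (y : ZMod b) :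
    (horizontalPath x y).card = 4 := by
  rw [horizontalPath_eq, card_product, card_window ha, card_singleton]

lemma card_verticalPath (hb : 4 ≤ b) (x : ZMod a) (y : ZMod b) :
    (verticalPath x y).card = 4 := by
  rw [verticalPath_eq, card_product, card_window hb, card_singleton]

def MeetsSamePaths (U V : Finset (ZMod a × ZMod b)) : Prop :=
  ∀ x y, (Disjoint (horizontalPath x y) U ↔ Disjoint (horizontalPath x y) V) ∧
    (Disjoint (verticalPath x y) U ↔ Disjoint (verticalPath x y) V)

namespace MeetsSamePaths

variable {U V : Finset (ZMod a × ZMod b)}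

lemma symm (h : MeetsSamePaths U V) : MeetsSamePaths V U :=
  fun x y => ⟨(h x y).1.symm, (h x y).2.symm⟩

lemma exists_mem_horizontal (h : MeetsSamePaths U V) {z : ZMod a × ZMod b} (hz : z ∈ U)
    {x : ZMod a} (hx : z.1 ∈ window x) : ∃ s ∈ window x, (s, z.2) ∈ V := by
  have hmeet : ¬Disjoint (horizontalPath x z.2) V :=
    (h x z.2).1.not.1 (not_disjoint_iff.2 ⟨z, mem_horizontalPath.2 ⟨hx, rfl⟩, hz⟩)
  obtain ⟨w, hw, hwV⟩ := not_disjoint_iff.1 hmeet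
  obtain ⟨hw1, hw2⟩ := mem_horizontalPath.1 hw
  exact ⟨w.1, hw1, hw2 ▸ hwV⟩

lemma exists_mem_vertical (h : MeetsSamePaths U V) {z : ZMod a × ZMod b} (hz : z ∈ U)
    {y : ZMod b} (hy : z.2 ∈ window y) : ∃ t ∈ window y, (z.1, t) ∈ V := by
  have hmeet : ¬Disjoint (verticalPath z.1 y) V :=
    (h z.1 y).2.not.1 (not_disjoint_iff.2 ⟨z, mem_verticalPath.2 ⟨rfl, hy⟩, hz⟩)
  obtain ⟨w, hw, hwV⟩ := not_disjoint_iff.1 hmeet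
  obtain ⟨hw1, hw2⟩ := mem_verticalPath.1 hw
  exact ⟨w.2, hw2, hw1 ▸ hwV⟩

lemma mem_cross (ha : 7 ≤ a) (hb : 7 ≤ b) (h : MeetsSamePaths U V) (hV : V.card ≤ 4)
    {p : ZMod a × ZMod b} (hpU : p ∈ U) (hpV : p ∉ V) : ∀ v ∈ V, v.1 = p.1 ∨ v.2 = p.2 := by
  obtain ⟨s, hs, hsV⟩ := h.exists_mem_horizontal hpU self_mem_window
  obtain ⟨s', hs', hs'V⟩ := h.exists_mem_horizontal hpU self_mem_window_sub_three
  obtain ⟨t, ht, htV⟩ := h.exists_mem_vertical hpU self_mem_window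
  obtain ⟨t', ht', ht'V⟩ := h.exists_mem_vertical hpU self_mem_window_sub_three
  have hsp : s ≠ p.1 := by rintro rfl; exact hpV hsV
  have hs'p : s' ≠ p.1 := by rintro rfl; exact hpV hs'V
  have htp : t ≠ p.2 := by rintro rfl; exact hpV htV
  have ht'p : t' ≠ p.2 := by rintro rfl; exact hpV ht'V
  have hss' : s ≠ s' := by
    rintro rfl; exact hsp (eq_of_mem_window_of_mem_window_sub_three ha hs hs')
  have htt' : t ≠ t' := by
    rintro rfl; exact htp (eq_of_mem_window_of_mem_window_sub_three hb ht ht')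
  have hsub : ({(s, p.2), (s', p.2), (p.1, t), (p.1, t')} : Finset _) ⊆
      V.filter fun v => v.1 = p.1 ∨ v.2 = p.2 := by
    simp [insert_subset_iff, hsV, hs'V, htV, ht'V]
  have hcard : ({(s, p.2), (s', p.2), (p.1, t), (p.1, t')} : Finset _).card = 4 := by
    rw [card_insert_of_notMem (by simp [hss', hsp, Ne.symm htp, Ne.symm ht'p]),
      card_insert_of_notMem (by simp [hs'p, Ne.symm htp, Ne.symm ht'p]),
      card_pair (by simp [htt'])]
  exact card_filter_eq_iff.1 (le_antisymm (card_filter_le _ _)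
    (hV.trans (hcard ▸ card_le_card hsub)))

lemma eq (ha : 7 ≤ a) (hb : 7 ≤ b) (h : MeetsSamePaths U V) (hcard : U.card = V.card)
    (hV : V.card ≤ 4) : U = V := by
  by_contra hne
  obtain ⟨p, hpU, hpV⟩ : ∃ p ∈ U, p ∉ V :=
    not_subset.1 fun hsub => hne (eq_of_subset_of_card_le hsub hcard.ge)
  obtain ⟨q, hqV, hqU⟩ : ∃ q ∈ V, q ∉ U :=
    not_subset.1 fun hsub => hne (eq_of_subset_of_card_le hsub hcard.le).symm
  have hcross := h.mem_cross ha hb hV hpU hpV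
  suffices q = p from hpV (this ▸ hqV)
  rcases hcross q hqV with hq | hq
  · obtain ⟨s, -, hsU⟩ := h.symm.exists_mem_horizontal hqV self_mem_window
    have hs : s ≠ p.1 := by rintro rfl; rw [← hq] at hsU; exact hqU hsU
    obtain ⟨t, ht, htV⟩ := h.exists_mem_vertical hsU self_mem_window
    obtain ⟨t', ht', ht'V⟩ := h.exists_mem_vertical hsU self_mem_window_sub_three
    obtain rfl := (hcross _ htV).resolve_left hs
    obtain rfl := (hcross _ ht'V).resolve_left hs
    exact Prod.ext hq (eq_of_mem_window_of_mem_window_sub_three hb ht ht').symm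
  · obtain ⟨t, -, htU⟩ := h.symm.exists_mem_vertical hqV self_mem_window
    have ht : t ≠ p.2 := by rintro rfl; rw [← hq] at htU; exact hqU htU
    obtain ⟨s, hs, hsV⟩ := h.exists_mem_horizontal htU self_mem_window
    obtain ⟨s', hs', hs'V⟩ := h.exists_mem_horizontal htU self_mem_window_sub_three
    obtain rfl := (hcross _ hsV).resolve_right ht
    obtain rfl := (hcross _ hs'V).resolve_right ht
    exact Prod.ext (eq_of_mem_window_of_mem_window_sub_three ha hs hs').symm hq

end MeetsSamePaths

lemma ncard_straightPaths_le [NeZero a] [NeZero b] :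
    {X : {s : Finset (ZMod a × ZMod b) // s.card = 4} |
      ∃ x y, X.1 = horizontalPath x y ∨ X.1 = verticalPath x y}.ncard ≤ 2 * (a * b) := by
  have hrange (f : ZMod a × ZMod b → Finset (ZMod a × ZMod b)) : (Set.range f).ncard ≤ a * b := by
    rw [← Set.image_univ]
    exact (Set.ncard_image_le (Set.toFinite _)).trans (by simp)
  rw [← Set.ncard_image_of_injective _ Subtype.val_injective]
  calc _ ≤ (Set.range (Function.uncurry horizontalPath) ∪
          Set.range (Function.uncurry verticalPath)).ncard := by
        refine Set.ncard_le_ncard ?_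
        rintro _ ⟨X, ⟨x, y, hX | hX⟩, rfl⟩
        · exact Or.inl ⟨(x, y), hX.symm⟩
        · exact Or.inr ⟨(x, y), hX.symm⟩
    _ ≤ a * b + a * b := (Set.ncard_union_le _ _).trans (add_le_add (hrange _) (hrange _))
    _ = 2 * (a * b) := by ring

end ToroidalGrid

/-- For `a, b ≥ 10` and `n = ab`, the collection of all straight paths with 4
vertices in the toroidal grid `C_a □ C_b` is a resolving set for the Kneser graph
`K(n,4)` on the ground set `(ℤ/aℤ) × (ℤ/bℤ)`; consequently `β(K(n,4)) ≤ 2n`. -/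
theorem toroidal_grid_resolving_kneser_4 (a b : ℕ) (ha : 10 ≤ a) (hb : 10 ≤ b) :
    resolvingSet (kneserGraphOn (ZMod a × ZMod b) 4)
      {X | ∃ (x : ZMod a) (y : ZMod b),
        X.1 = Finset.image (fun i : Fin 4 => (x + (i : ℕ), y)) Finset.univ ∨
        X.1 = Finset.image (fun j : Fin 4 => (x, y + (j : ℕ))) Finset.univ} ∧
    metricDim (kneserGraphOn (ZMod a × ZMod b) 4) ≤ 2 * (a * b) := by
  have : NeZero a := ⟨by omega⟩
  have : NeZero b := ⟨by omega⟩
  have hres : resolvingSet (kneserGraphOn (ZMod a × ZMod b) 4) {X | ∃ x y,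
      X.1 = ToroidalGrid.horizontalPath x y ∨ X.1 = ToroidalGrid.verticalPath x y} := by
    refine resolvingSet_kneserGraphOn fun U V hUV => ?_
    by_contra! hsame
    have hmeet : ToroidalGrid.MeetsSamePaths U.1 V.1 := fun x y =>
      ⟨hsame ⟨_, ToroidalGrid.card_horizontalPath (by omega) x y⟩ ⟨x, y, .inl rfl⟩,
        hsame ⟨_, ToroidalGrid.card_verticalPath (by omega) x y⟩ ⟨x, y, .inr rfl⟩⟩
    exact hUV (Subtype.ext (hmeet.eq (by omega) (by omega) (U.2.trans V.2.symm) V.2.le))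
  exact ⟨hres,
    (metricDim_le_ncard hres (Set.toFinite _)).trans ToroidalGrid.ncard_straightPaths_le⟩
end
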